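/- Let N ≥ 3 be an odd integer. The quadratic form Q on the space of functions u : (ℤ/N)³ → ℝ defined by Q(u) = Σ_{a,b ∈ (ℤ/N)³} u(a) u(b) · 2^{−‖a−b‖₁} · [‖a−b‖_∞ ≤ 1] is positive definite, where for c ∈ (ℤ/N)³ the norms ‖c‖₁ and ‖c‖_∞ are computed from the representatives of the coordinates of c in {−(N−1)/2, …, (N−1)/2} ⊂ ℤ, and [·] denotes the indicator. -/

import Mathlib

/-!
In each coordinate, `2 ^ (-|x|) [|x| ≤ 1]` is half the autocorrelation `∑ₛ m (p - s) m (q - s)`,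
`x = p - q`, of the indicator `m` of `{0, 1}`; this needs `N ≥ 3`, so that `0`, `1`, `-1` are
distinct. Taking products over the coordinates, `8 Q(u) = ∑_g V(g)²`, where `V(g)` is the sum of `u`
over the vertices of the unit cube based at `g`. The map `u ↦ V` is the composite of the operators
`f ↦ f + f (· + eᵢ)`, each injective because `eᵢ` has odd order: `f (· + eᵢ) = -f` forces
`f = (-1) ^ N f = -f`.
-/

open Finset

lemma zpow_sum₀ {ι G₀ : Type*} [CommGroupWithZero G₀] {a : G₀} (ha : a ≠ 0) (s : Finset ι)
    (f : ι → ℤ) : a ^ (∑ i ∈ s, f i) = ∏ i ∈ s, a ^ f i := by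
  classical
  induction s using Finset.induction_on with
  | empty => simp
  | insert i s hi ih => rw [sum_insert hi, prod_insert hi, zpow_add₀ ha, ih]

lemma sum_sq_sum_mul {α β R : Type*} [Fintype α] [Fintype β] [CommSemiring R] (u : α → R)
    (P : α → β → R) :
    ∑ g, (∑ a, u a * P a g) ^ 2 = ∑ a, ∑ b, u a * u b * ∑ g, P a g * P b g := by
  simp_rw [sq, sum_mul_sum, mul_sum]
  rw [sum_comm]
  refine sum_congr rfl fun a _ => ?_
  rw [sum_comm]
  exact sum_congr rfl fun b _ => sum_congr rfl fun g _ => by ring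

section ShiftSum

variable {G : Type*} [AddMonoid G]

def shiftSum (e : G) (f : G → ℝ) (g : G) : ℝ := f g + f (g + e)

lemma eq_zero_of_shiftSum_eq_zero {n : ℕ} (hn : Odd n) {e : G} (he : n • e = 0) {f : G → ℝ}
    (h : shiftSum e f = 0) : f = 0 := by
  have hstep (g : G) : f (g + e) = -f g := by
    have := congrFun h g
    simp only [shiftSum, Pi.zero_apply] at this
    linarith
  have hiter (k : ℕ) (g : G) : f (g + k • e) = (-1) ^ k * f g := by
    induction k generalizing g with
    | zero => simp
    | succ k ih => rw [succ_nsmul', ← add_assoc, ih, hstep, pow_succ]; ring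
  funext g
  have := hiter n g
  rw [he, add_zero, hn.neg_one_pow] at this
  simp only [Pi.zero_apply]
  linarith

end ShiftSum

namespace CubicalMetric

variable {N : ℕ} {ι : Type*}

def segment (x : ZMod N) : ℝ := (if x = 1 then 1 else 0) + if x = 0 then 1 else 0

section Cube

variable [DecidableEq ι]

def vertex (T : Finset ι) : ι → ZMod N := fun i => if i ∈ T then 1 else 0

def cubeSum (S : Finset ι) (u : (ι → ZMod N) → ℝ) (g : ι → ZMod N) : ℝ :=
  ∑ T ∈ S.powerset, u (g + vertex T)

lemma vertex_empty : (vertex ∅ : ι → ZMod N) = 0 := by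
  funext i
  simp [vertex]

lemma vertex_insert {i : ι} {T : Finset ι} (hi : i ∉ T) :
    (vertex (insert i T) : ι → ZMod N) = Pi.single i 1 + vertex T := by
  funext j
  by_cases hj : j = i
  · subst hj
    simp [vertex, hi]
  · simp [vertex, hj]

lemma cubeSum_empty (u : (ι → ZMod N) → ℝ) : cubeSum ∅ u = u := by
  funext g
  simp [cubeSum, vertex_empty]

lemma cubeSum_insert {i : ι} {S : Finset ι} (hi : i ∉ S) (u : (ι → ZMod N) → ℝ) :
    cubeSum (insert i S) u = shiftSum (Pi.single i 1) (cubeSum S u) := by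
  funext g
  rw [cubeSum, sum_powerset_insert hi, shiftSum, cubeSum, cubeSum]
  congr 1
  refine sum_congr rfl fun T hT => ?_
  rw [vertex_insert (fun h => hi (mem_powerset.1 hT h)), ← add_assoc]

lemma eq_zero_of_cubeSum_eq_zero (hodd : Odd N) {S : Finset ι} {u : (ι → ZMod N) → ℝ}
    (h : cubeSum S u = 0) : u = 0 := by
  induction S using Finset.induction_on generalizing u with
  | empty => rwa [cubeSum_empty] at h
  | insert i S hi ih =>
    rw [cubeSum_insert hi] at h
    exact ih (eq_zero_of_shiftSum_eq_zero hodd (by ext j; by_cases j = i <;> simp [*]) h)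

variable [Fintype ι]

lemma prod_segment_eq_sum (a g : ι → ZMod N) :
    ∏ i, segment (a i - g i) = ∑ T : Finset ι, if a = g + vertex T then 1 else 0 := by
  simp only [segment, prod_add, powerset_univ]
  refine sum_congr rfl fun T _ => ?_
  nth_rewrite 1 [← univ_inter T]
  rw [← prod_piecewise]
  have hcoord (i : ι) : T.piecewise (fun i => if a i - g i = 1 then (1 : ℝ) else 0)
      (fun i => if a i - g i = 0 then 1 else 0) i = if a i = g i + vertex T i then 1 else 0 := by
    by_cases hi : i ∈ T <;> simp [hi, vertex, sub_eq_iff_eq_add']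
  simp only [hcoord, Fintype.prod_boole, funext_iff, Pi.add_apply]

lemma sum_mul_prod_segment [NeZero N] (u : (ι → ZMod N) → ℝ) (g : ι → ZMod N) :
    ∑ a, u a * ∏ i, segment (a i - g i) = cubeSum univ u g := by
  simp only [prod_segment_eq_sum, mul_sum, mul_ite, mul_one, mul_zero]
  rw [sum_comm]
  simp [cubeSum, powerset_univ]

end Cube

noncomputable def weight (x : ZMod N) : ℝ :=
  (2 : ℝ) ^ (-|x.valMinAbs|) * if x.valMinAbs.natAbs ≤ 1 then 1 else 0

section Weight

variable [NeZero N]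

lemma eq_intCast_iff_valMinAbs_eq {y : ℤ} (hy : 2 * |y| < N) (x : ZMod N) :
    x = y ↔ x.valMinAbs = y := by
  rw [ZMod.valMinAbs_spec, iff_self_and, Set.mem_Ioc]
  intro
  rcases abs_cases y with ⟨h, _⟩ | ⟨h, _⟩ <;> rw [h] at hy <;> omega

lemma two_mul_weight (hN : 3 ≤ N) (x : ZMod N) :
    2 * weight x = segment (-x) + segment (1 - x) := by
  have h0 : x = 0 ↔ x.valMinAbs = 0 := (ZMod.valMinAbs_eq_zero x).symm
  have h1 : x = 1 ↔ x.valMinAbs = 1 := by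
    simpa using eq_intCast_iff_valMinAbs_eq (y := 1) (by simp; omega) x
  have hm1 : x = -1 ↔ x.valMinAbs = -1 := by
    simpa using eq_intCast_iff_valMinAbs_eq (y := -1) (by simp; omega) x
  simp only [weight, segment, neg_eq_iff_eq_neg, neg_zero, sub_eq_self, sub_eq_zero,
    eq_comm (a := (1 : ZMod N)), h0, h1, hm1]
  generalize x.valMinAbs = v
  rcases (by omega : v = -1 ∨ v = 0 ∨ v = 1 ∨ 1 < v.natAbs) with rfl | rfl | rfl | hv
  · norm_num
  · norm_num
  · norm_num
  · have : v ≠ -1 ∧ v ≠ 0 ∧ v ≠ 1 := by omega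
    simp [this, hv.not_ge]

lemma two_mul_weight_sub (hN : 3 ≤ N) (p q : ZMod N) :
    2 * weight (p - q) = ∑ s, segment (p - s) * segment (q - s) := by
  have hseg (s : ZMod N) :
      segment (p - s) = (if s = p - 1 then 1 else 0) + if s = p then 1 else 0 := by
    simp only [segment, sub_eq_iff_eq_add, eq_sub_iff_add_eq, add_comm s, eq_comm (a := p),
      zero_add]
  simp only [hseg, add_mul, ite_mul, one_mul, zero_mul, sum_add_distrib, sum_ite_eq', mem_univ,
    if_true, two_mul_weight hN]
  ring_nf

end Weight

variable [Fintype ι]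

/-- `2 ^ (-‖x‖₁) [‖x‖_∞ ≤ 1]`. -/
noncomputable def kernel (x : ι → ZMod N) : ℝ :=
  (2 : ℝ) ^ (-(∑ i, |(x i).valMinAbs|)) *
    if (univ.sup fun i => (x i).valMinAbs.natAbs) ≤ 1 then 1 else 0

lemma kernel_eq_prod_weight (x : ι → ZMod N) : kernel x = ∏ i, weight (x i) := by
  simp only [kernel, weight, prod_mul_distrib, ← sum_neg_distrib,
    zpow_sum₀ (two_ne_zero : (2 : ℝ) ≠ 0), Fintype.prod_boole, Finset.sup_le_iff, mem_univ,
    true_imp_iff]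

variable [DecidableEq ι] [NeZero N]

lemma two_pow_mul_prod_weight (hN : 3 ≤ N) (a b : ι → ZMod N) :
    2 ^ Fintype.card ι * ∏ i, weight (a i - b i) =
      ∑ g : ι → ZMod N, (∏ i, segment (a i - g i)) * ∏ i, segment (b i - g i) := by
  calc 2 ^ Fintype.card ι * ∏ i, weight (a i - b i) = ∏ i, 2 * weight (a i - b i) := by
        rw [prod_mul_distrib, prod_const, card_univ]
    _ = ∏ i, ∑ s, segment (a i - s) * segment (b i - s) := by
        simp only [two_mul_weight_sub hN]
    _ = _ := by
        rw [Fintype.prod_sum]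
        simp only [prod_mul_distrib]

lemma two_pow_mul_sum_kernel (hN : 3 ≤ N) (u : (ι → ZMod N) → ℝ) :
    2 ^ Fintype.card ι * ∑ a, ∑ b, u a * u b * kernel (a - b) = ∑ g, cubeSum univ u g ^ 2 := by
  simp only [← sum_mul_prod_segment, sum_sq_sum_mul, ← two_pow_mul_prod_weight hN, mul_sum,
    kernel_eq_prod_weight, Pi.sub_apply]
  exact sum_congr rfl fun a _ => sum_congr rfl fun b _ => by ring

theorem sum_kernel_pos (hN : 3 ≤ N) (hodd : Odd N) {u : (ι → ZMod N) → ℝ} (hu : u ≠ 0) :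
    0 < ∑ a, ∑ b, u a * u b * kernel (a - b) := by
  obtain ⟨g, hg⟩ : ∃ g, cubeSum univ u g ≠ 0 := by
    by_contra! h
    exact hu (eq_zero_of_cubeSum_eq_zero hodd (funext h))
  have hsq : 0 < ∑ g, cubeSum univ u g ^ 2 :=
    sum_pos' (fun g _ => sq_nonneg _) ⟨g, mem_univ g, by positivity⟩
  rw [← two_pow_mul_sum_kernel hN] at hsq
  exact pos_of_mul_pos_right hsq (by positivity)

end CubicalMetric

theorem cubical_metric_posDef
    (N : ℕ) [NeZero N] (hN : 3 ≤ N) (hNodd : Odd N)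
    (Q : ((Fin 3 → ZMod N) → ℝ) → ℝ)
    (hQ : ∀ u : (Fin 3 → ZMod N) → ℝ,
      Q u = ∑ a : Fin 3 → ZMod N, ∑ b : Fin 3 → ZMod N,
        u a * u b * ((2 : ℝ) ^ (-(∑ i : Fin 3, |((a - b) i).valMinAbs|)) *
          (if (Finset.univ.sup fun i : Fin 3 => ((a - b) i).valMinAbs.natAbs) ≤ 1
            then 1 else 0))) :
    ∀ u : (Fin 3 → ZMod N) → ℝ, u ≠ 0 → 0 < Q u := by
  intro u hu
  rw [hQ u]
  exact CubicalMetric.sum_kernel_pos hN hNodd hu
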